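/- arXiv:1607.04548 — 2 statements merged into one kernel-verified Lean document; each statement's English description precedes it below -/
import Mathlib

section
/- Let G=(V,E) be a locally finite graph with symmetric positive edge weights, and suppose μ(x) ≥ μ_min > 0 for all x ∈ V and h satisfies (H1) and (H2). If (u_k) is a bounded sequence in ℋ, then there exists u ∈ ℋ such that, up to a subsequence, u_k converges to u weakly in ℋ and u_k converges to u strongly in L^q(V,μ) for every q with 1 ≤ q ≤ +∞; in particular ℋ is compactly embedded in L^q(V,μ) for all 1 ≤ q ≤ +∞. -/
open Filter Topology

namespace GraphNLE

variable {V : Type*}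

/-- Integral of `g` over `V` w.r.t. the measure `μ`: `∫_V g dμ = Σ_x μ(x) g(x)`. -/
noncomputable def intV (μ g : V → ℝ) : ℝ := ∑' x, μ x * g x

/-- The graph (μ-)Laplacian: `Δu(x) = (1/μ(x)) Σ_{y} w_{xy} (u(y)-u(x))`. -/
noncomputable def lap (w : V → V → ℝ) (μ u : V → ℝ) (x : V) : ℝ :=
  (1 / μ x) * ∑' y, w x y * (u y - u x)

/-- Squared length of the gradient: `|∇u|²(x) = (1/(2μ(x))) Σ_y w_{xy} (u(y)-u(x))²`. -/
noncomputable def gradSq (w : V → V → ℝ) (μ u : V → ℝ) (x : V) : ℝ :=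
  (1 / (2 * μ x)) * ∑' y, w x y * (u y - u x) ^ 2

/-- The gradient form `Γ(u,v)(x) = (1/(2μ(x))) Σ_y w_{xy} (u(y)-u(x))(v(y)-v(x))`. -/
noncomputable def gamma (w : V → V → ℝ) (μ u v : V → ℝ) (x : V) : ℝ :=
  (1 / (2 * μ x)) * ∑' y, w x y * (u y - u x) * (v y - v x)

/-- Membership in `W^{1,2}(V)`: finite `∫(|∇u|² + u²) dμ`. -/
def memW (w : V → V → ℝ) (μ u : V → ℝ) : Prop :=
  Summable (fun x => μ x * gradSq w μ u x) ∧ Summable (fun x => μ x * u x ^ 2)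

/-- The `W^{1,2}` norm `(∫_V (|∇u|² + u²) dμ)^{1/2}`. -/
noncomputable def normW (w : V → V → ℝ) (μ u : V → ℝ) : ℝ :=
  Real.sqrt (intV μ fun x => gradSq w μ u x + u x ^ 2)

/-- Membership in the space `ℋ`: finite `∫(|∇u|² + h u²) dμ`. -/
def memH (w : V → V → ℝ) (μ h u : V → ℝ) : Prop :=
  Summable (fun x => μ x * gradSq w μ u x) ∧ Summable (fun x => μ x * (h x * u x ^ 2))

/-- The norm of `ℋ`: `‖u‖_ℋ = (∫_V (|∇u|² + h u²) dμ)^{1/2}`. -/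
noncomputable def normH (w : V → V → ℝ) (μ h u : V → ℝ) : ℝ :=
  Real.sqrt (intV μ fun x => gradSq w μ u x + h x * u x ^ 2)

/-- The inner product of `ℋ`: `⟨u,v⟩_ℋ = ∫_V (Γ(u,v) + h u v) dμ`. -/
noncomputable def innerH (w : V → V → ℝ) (μ h u v : V → ℝ) : ℝ :=
  intV μ fun x => gamma w μ u v x + h x * u x * v x

/-- `λ₁ = inf { ∫(|∇u|² + h u²) dμ : u ∈ ℋ, ∫ u² dμ = 1 }`. -/
noncomputable def lambda1 (w : V → V → ℝ) (μ h : V → ℝ) : ℝ :=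
  sInf {t : ℝ | ∃ u : V → ℝ, memH w μ h u ∧ intV μ (fun x => u x ^ 2) = 1 ∧
    intV μ (fun x => gradSq w μ u x + h x * u x ^ 2) = t}

/-- The primitive `F(x,s) = ∫_0^s f(x,t) dt`. -/
noncomputable def Fint (f : V → ℝ → ℝ) (x : V) (s : ℝ) : ℝ := ∫ t in (0:ℝ)..s, f x t

/-- The functional `J(u) = (1/2)∫(|∇u|² + h u²) dμ − ∫ F(x,u) dμ`. -/
noncomputable def energy (w : V → V → ℝ) (μ h : V → ℝ) (f : V → ℝ → ℝ) (u : V → ℝ) : ℝ :=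
  (1 / 2) * intV μ (fun x => gradSq w μ u x + h x * u x ^ 2) -
    intV μ (fun x => Fint f x (u x))

/-- The perturbed functional `J_ε(u) = J(u) − ε ∫ g u dμ`. -/
noncomputable def energyP (w : V → V → ℝ) (μ h : V → ℝ) (f : V → ℝ → ℝ) (g : V → ℝ)
    (ε : ℝ) (u : V → ℝ) : ℝ :=
  energy w μ h f u - ε * intV μ (fun x => g x * u x)

/-- Weak convergence `u_k ⇀ u` in the Hilbert space `ℋ`. -/
def weakConvH (w : V → V → ℝ) (μ h : V → ℝ) (uk : ℕ → V → ℝ) (u : V → ℝ) : Prop :=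
  ∀ v : V → ℝ, memH w μ h v →
    Tendsto (fun k => innerH w μ h (uk k) v) atTop (nhds (innerH w μ h u v))

/-- The `L^q(V,μ)` norm for finite `q`. -/
noncomputable def LqNorm (μ : V → ℝ) (q : ℝ) (u : V → ℝ) : ℝ :=
  (intV μ fun x => |u x| ^ q) ^ (1 / q)

/-- The `L^∞(V)` norm `sup_x |u(x)|`. -/
noncomputable def LinfNorm (u : V → ℝ) : ℝ := ⨆ x, |u x|

/-- `g` (viewed via the pairing `u ↦ ∫ g u dμ`) belongs to the dual `ℋ'` of `ℋ`. -/
def memHdual (w : V → V → ℝ) (μ h g : V → ℝ) : Prop :=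
  ∃ C : ℝ, ∀ u : V → ℝ, memH w μ h u →
    Summable (fun x => μ x * (g x * u x)) ∧
    |intV μ fun x => g x * u x| ≤ C * normH w μ h u

/-- `u ∈ ℋ` is a weak solution of `−Δu + hu = f(x,u)`. -/
def weakSol (w : V → V → ℝ) (μ h : V → ℝ) (f : V → ℝ → ℝ) (u : V → ℝ) : Prop :=
  memH w μ h u ∧ ∀ φ : V → ℝ, memH w μ h φ →
    intV μ (fun x => gamma w μ u φ x + h x * u x * φ x) =
      intV μ (fun x => f x (u x) * φ x)

/-- `u ∈ ℋ` is a weak solution of the perturbed equation `−Δu + hu = f(x,u) + εg`. -/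
def weakSolP (w : V → V → ℝ) (μ h : V → ℝ) (f : V → ℝ → ℝ) (g : V → ℝ) (ε : ℝ)
    (u : V → ℝ) : Prop :=
  memH w μ h u ∧ ∀ φ : V → ℝ, memH w μ h φ →
    intV μ (fun x => gamma w μ u φ x + h x * u x * φ x) =
      intV μ (fun x => f x (u x) * φ x) + ε * intV μ (fun x => g x * φ x)

/-- The simple graph underlying the weights `w` (edges where the weight is nonzero). -/
def adjGraph (w : V → V → ℝ) : SimpleGraph V where
  Adj x y := x ≠ y ∧ (w x y ≠ 0 ∨ w y x ≠ 0)
  symm := ⟨fun x y hxy => ⟨hxy.1.symm, hxy.2.symm⟩⟩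
  loopless := ⟨fun x hx => hx.1 rfl⟩



/-!
A bounded sequence in `ℋ` is pointwise bounded, since `μ h u² ≤ ‖u‖²_ℋ` at every vertex. The
vertex set is countable (`∑ μ/h < ∞` with positive terms), so by Tychonoff a subsequence converges
pointwise to some `u`, and `u ∈ ℋ` by Fatou. For `d_k = u_k - u` Young's inequality gives
`2 μ |d_k| ≤ t (|∇d_k|² + h d_k²) μ + t⁻¹ μ / h` for every `t > 0`; as `‖d_k‖_ℋ` is bounded and
`∑ μ/h < ∞`, the tails of `∑ μ |d_k|` are uniformly small, so `d_k → 0` in `L¹`. The same argument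
applied to `⟨d_k, v⟩_ℋ` gives weak convergence. Finally `μ ≥ μ_min` lets `L¹` control `L^∞`, and
once `|d_k| ≤ 1` we have `‖d_k‖_q^q ≤ ‖d_k‖_1`.
-/

theorem two_mul_abs_mul_le {t : ℝ} (ht : 0 < t) (a b : ℝ) :
    2 * |a * b| ≤ t * a ^ 2 + t⁻¹ * b ^ 2 := by
  have key : 0 ≤ (t * |a| - |b|) ^ 2 / t := by positivity
  have expand : (t * |a| - |b|) ^ 2 / t = t * a ^ 2 + t⁻¹ * b ^ 2 - 2 * |a * b| := by
    rw [abs_mul, ← sq_abs a, ← sq_abs b]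
    field_simp
    ring
  linarith

section Series

variable {ι α : Type*} {l : Filter ι}

theorem summable_and_tsum_le_of_tendsto [l.NeBot] {F : ι → α → ℝ} {f : α → ℝ} {K : ℝ}
    (hF0 : ∀ i x, 0 ≤ F i x) (hF : ∀ i, Summable (F i)) (hK : ∀ i, ∑' x, F i x ≤ K)
    (hlim : ∀ x, Tendsto (fun i => F i x) l (𝓝 (f x))) :
    Summable f ∧ ∑' x, f x ≤ K := by
  have hf0 : 0 ≤ f := fun x => ge_of_tendsto' (hlim x) (hF0 · x)
  have hsum_le : ∀ s : Finset α, ∑ x ∈ s, f x ≤ K := fun s =>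
    le_of_tendsto' (tendsto_finsetSum s fun x _ => hlim x) fun i =>
      ((hF i).sum_le_tsum s fun x _ => hF0 i x).trans (hK i)
  have hf := summable_of_sum_le hf0 hsum_le
  exact ⟨hf, hf.tsum_le_of_sum_le hsum_le⟩

/-- Dominated convergence with a moving majorant: choosing `t` small makes `t * ∑ A i` small
uniformly in `i`, and then the tail of `t⁻¹ * B` outside a large finite set is small too. -/
theorem tendsto_tsum_zero_of_abs_le {F A : ι → α → ℝ} {B : α → ℝ} {K : ℝ}
    (hF : ∀ x, Tendsto (fun i => F i x) l (𝓝 0))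
    (hA0 : ∀ i x, 0 ≤ A i x) (hA : ∀ i, Summable (A i)) (hAK : ∀ i, ∑' x, A i x ≤ K)
    (hB : Summable B)
    (hFAB : ∀ t > 0, ∀ i x, |F i x| ≤ t * A i x + t⁻¹ * B x) :
    Tendsto (fun i => ∑' x, F i x) l (𝓝 0) := by
  rw [Metric.tendsto_nhds]
  intro ε hε
  set t := ε / (3 * (|K| + 1)) with ht_def
  have ht : 0 < t := by positivity
  have htK : t * K < ε / 3 := by
    rw [ht_def, div_mul_eq_mul_div, div_lt_iff₀ (by positivity)]
    nlinarith [le_abs_self K]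
  obtain ⟨s, hs⟩ : ∃ s : Finset α, ∑' x : ↥(s : Set α)ᶜ, B x < t * (ε / 3) :=
    ((tendsto_tsum_compl_atTop_zero B).eventually (gt_mem_nhds (by positivity))).exists
  have hhead : ∀ᶠ i in l, |∑ x ∈ s, F i x| < ε / 3 := by
    have := tendsto_finsetSum s fun x _ => hF x
    simp only [Finset.sum_const_zero] at this
    simpa [Real.dist_eq] using (Metric.tendsto_nhds.1 this) (ε / 3) (by positivity)
  filter_upwards [hhead] with i hi
  have hAs : Summable fun x : ↥(s : Set α)ᶜ => t * A i x := ((hA i).subtype _).mul_left t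
  have hBs : Summable fun x : ↥(s : Set α)ᶜ => t⁻¹ * B x := (hB.subtype _).mul_left _
  have hFs : Summable fun x : ↥(s : Set α)ᶜ => ‖F i x‖ :=
    .of_nonneg_of_le (fun _ => norm_nonneg _) (fun x => hFAB t ht i x) (hAs.add hBs)
  have htail : ‖∑' x : ↥(s : Set α)ᶜ, F i x‖ < 2 * ε / 3 :=
    calc ‖∑' x : ↥(s : Set α)ᶜ, F i x‖
        ≤ ∑' x : ↥(s : Set α)ᶜ, (t * A i x + t⁻¹ * B x) :=
          (norm_tsum_le_tsum_norm hFs).trans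
            (hFs.tsum_le_tsum (fun x => hFAB t ht i x) (hAs.add hBs))
      _ = t * ∑' x : ↥(s : Set α)ᶜ, A i x + t⁻¹ * ∑' x : ↥(s : Set α)ᶜ, B x := by
          rw [hAs.tsum_add hBs, tsum_mul_left, tsum_mul_left]
      _ < ε / 3 + ε / 3 := by
          have hAtail := mul_le_mul_of_nonneg_left
            (((hA i).tsum_subtype_le _ (s : Set α)ᶜ (hA0 i)).trans (hAK i)) ht.le
          have hBtail : t⁻¹ * ∑' x : ↥(s : Set α)ᶜ, B x < ε / 3 := by
            rw [inv_mul_lt_iff₀ ht]; exact hs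
          linarith
      _ = 2 * ε / 3 := by ring
  have hFsum : Summable (F i) :=
    (((hA i).mul_left t).add (hB.mul_left t⁻¹)).of_norm_bounded (hFAB t ht i)
  rw [Real.dist_eq, sub_zero, ← hFsum.sum_add_tsum_compl (s := s)]
  exact (abs_add_le _ _).trans_lt (by rw [← Real.norm_eq_abs (∑' _, _)]; linarith)

end Series

section Gradient

variable {w : V → V → ℝ} {μ : V → ℝ} {x : V}

theorem gradSq_eq_sum (hx : {y | w x y ≠ 0}.Finite) (u : V → ℝ) :
    gradSq w μ u x = 1 / (2 * μ x) * ∑ y ∈ hx.toFinset, w x y * (u y - u x) ^ 2 := by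
  rw [gradSq, tsum_eq_sum (s := hx.toFinset) fun y hy => by simp_all]

theorem gamma_eq_sum (hx : {y | w x y ≠ 0}.Finite) (u v : V → ℝ) :
    gamma w μ u v x =
      1 / (2 * μ x) * ∑ y ∈ hx.toFinset, w x y * (u y - u x) * (v y - v x) := by
  rw [gamma, tsum_eq_sum (s := hx.toFinset) fun y hy => by simp_all]

theorem gradSq_nonneg (hw : ∀ y, 0 ≤ w x y) (hμ : 0 ≤ μ x) (u : V → ℝ) :
    0 ≤ gradSq w μ u x :=
  mul_nonneg (by positivity) (tsum_nonneg fun y => mul_nonneg (hw y) (sq_nonneg _))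

theorem continuous_gradSq (hx : {y | w x y ≠ 0}.Finite) :
    Continuous fun u : V → ℝ => gradSq w μ u x := by
  simp only [gradSq_eq_sum hx]
  fun_prop

theorem continuous_gamma (hx : {y | w x y ≠ 0}.Finite) (v : V → ℝ) :
    Continuous fun u : V → ℝ => gamma w μ u v x := by
  simp only [gamma_eq_sum hx]
  fun_prop

theorem gamma_sub_left (hx : {y | w x y ≠ 0}.Finite) (a b v : V → ℝ) :
    gamma w μ (a - b) v x = gamma w μ a v x - gamma w μ b v x := by
  simp only [gamma_eq_sum hx, ← mul_sub, ← Finset.sum_sub_distrib, Pi.sub_apply]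
  congr 1
  exact Finset.sum_congr rfl fun y _ => by ring

theorem gradSq_sub_le (hx : {y | w x y ≠ 0}.Finite) (hw : ∀ y, 0 ≤ w x y) (hμ : 0 ≤ μ x)
    (a b : V → ℝ) :
    gradSq w μ (a - b) x ≤ 2 * gradSq w μ a x + 2 * gradSq w μ b x := by
  have hsum : ∑ y ∈ hx.toFinset, w x y * ((a - b) y - (a - b) x) ^ 2 ≤
      2 * ∑ y ∈ hx.toFinset, w x y * (a y - a x) ^ 2 +
        2 * ∑ y ∈ hx.toFinset, w x y * (b y - b x) ^ 2 := by
    rw [Finset.mul_sum, Finset.mul_sum, ← Finset.sum_add_distrib]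
    refine Finset.sum_le_sum fun y _ => ?_
    simp only [Pi.sub_apply]
    nlinarith [mul_nonneg (hw y) (sq_nonneg (a y - a x + (b y - b x)))]
  rw [gradSq_eq_sum hx, gradSq_eq_sum hx, gradSq_eq_sum hx]
  linear_combination mul_le_mul_of_nonneg_left hsum (by positivity : 0 ≤ 1 / (2 * μ x))

theorem two_mul_abs_gamma_le (hx : {y | w x y ≠ 0}.Finite) (hw : ∀ y, 0 ≤ w x y)
    (hμ : 0 ≤ μ x) {t : ℝ} (ht : 0 < t) (a v : V → ℝ) :
    2 * |gamma w μ a v x| ≤ t * gradSq w μ a x + t⁻¹ * gradSq w μ v x := by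
  have hc : 0 ≤ 1 / (2 * μ x) := by positivity
  have hsum : 2 * |∑ y ∈ hx.toFinset, w x y * (a y - a x) * (v y - v x)| ≤
      t * ∑ y ∈ hx.toFinset, w x y * (a y - a x) ^ 2 +
        t⁻¹ * ∑ y ∈ hx.toFinset, w x y * (v y - v x) ^ 2 := by
    rw [Finset.mul_sum, Finset.mul_sum, ← Finset.sum_add_distrib]
    refine (mul_le_mul_of_nonneg_left (Finset.abs_sum_le_sum_abs _ _) two_pos.le).trans ?_
    rw [Finset.mul_sum]
    refine Finset.sum_le_sum fun y _ => ?_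
    have := mul_le_mul_of_nonneg_left (two_mul_abs_mul_le ht (a y - a x) (v y - v x)) (hw y)
    rw [mul_assoc, abs_mul, abs_of_nonneg (hw y)]
    linarith
  rw [gamma_eq_sum hx, gradSq_eq_sum hx, gradSq_eq_sum hx, abs_mul, abs_of_nonneg hc]
  linear_combination mul_le_mul_of_nonneg_left hsum hc

end Gradient

section Energy

variable {w : V → V → ℝ} {μ h : V → ℝ} {x : V}

noncomputable def energyDensity (w : V → V → ℝ) (μ h u : V → ℝ) (x : V) : ℝ :=
  μ x * (gradSq w μ u x + h x * u x ^ 2)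

theorem tsum_energyDensity_le_sq {u : V → ℝ} {C : ℝ} (hu : normH w μ h u ≤ C) :
    ∑' x, energyDensity w μ h u x ≤ C ^ 2 :=
  (Real.sqrt_le_iff.1 hu).2

theorem energyDensity_nonneg (hw : ∀ y, 0 ≤ w x y) (hμ : 0 ≤ μ x) (hh : 0 ≤ h x)
    (u : V → ℝ) : 0 ≤ energyDensity w μ h u x :=
  mul_nonneg hμ (add_nonneg (gradSq_nonneg hw hμ u) (by positivity))

theorem memH_iff_summable_energyDensity (hw : ∀ x y, 0 ≤ w x y) (hμ : ∀ x, 0 ≤ μ x)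
    (hh : ∀ x, 0 ≤ h x) {u : V → ℝ} :
    memH w μ h u ↔ Summable (energyDensity w μ h u) := by
  have hgrad : ∀ x, 0 ≤ μ x * gradSq w μ u x := fun x =>
    mul_nonneg (hμ x) (gradSq_nonneg (hw x) (hμ x) u)
  have hpot : ∀ x, 0 ≤ μ x * (h x * u x ^ 2) := fun x =>
    mul_nonneg (hμ x) (mul_nonneg (hh x) (sq_nonneg _))
  refine ⟨fun hu => (hu.1.add hu.2).congr fun x => by rw [energyDensity, mul_add],
    fun hu => ⟨hu.of_nonneg_of_le hgrad fun x => ?_, hu.of_nonneg_of_le hpot fun x => ?_⟩⟩ <;>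
  · rw [energyDensity, mul_add]
    linarith [hgrad x, hpot x]

theorem continuous_energyDensity (hx : {y | w x y ≠ 0}.Finite) :
    Continuous fun u : V → ℝ => energyDensity w μ h u x := by
  have := continuous_gradSq (μ := μ) hx
  unfold energyDensity
  fun_prop

theorem energyDensity_sub_le (hx : {y | w x y ≠ 0}.Finite) (hw : ∀ y, 0 ≤ w x y)
    (hμ : 0 ≤ μ x) (hh : 0 ≤ h x) (a b : V → ℝ) :
    energyDensity w μ h (a - b) x ≤ 2 * energyDensity w μ h a x + 2 * energyDensity w μ h b x := by
  have hgrad := gradSq_sub_le hx hw hμ a b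
  have hpot : h x * (a x - b x) ^ 2 ≤ 2 * (h x * a x ^ 2) + 2 * (h x * b x ^ 2) := by
    nlinarith [mul_nonneg hh (sq_nonneg (a x + b x))]
  simp only [energyDensity, Pi.sub_apply]
  nlinarith [mul_le_mul_of_nonneg_left (add_le_add hgrad hpot) hμ]

theorem two_mul_abs_innerDensity_le (hx : {y | w x y ≠ 0}.Finite) (hw : ∀ y, 0 ≤ w x y)
    (hμ : 0 ≤ μ x) (hh : 0 ≤ h x) {t : ℝ} (ht : 0 < t) (a v : V → ℝ) :
    2 * |μ x * (gamma w μ a v x + h x * a x * v x)| ≤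
      t * energyDensity w μ h a x + t⁻¹ * energyDensity w μ h v x := by
  have hgrad := two_mul_abs_gamma_le hx hw hμ ht a v
  have hpot : 2 * |h x * a x * v x| ≤ h x * (t * a x ^ 2 + t⁻¹ * v x ^ 2) := by
    rw [mul_assoc, abs_mul, abs_of_nonneg hh, mul_left_comm]
    exact mul_le_mul_of_nonneg_left (two_mul_abs_mul_le ht _ _) hh
  have hsplit := abs_add_le (gamma w μ a v x) (h x * a x * v x)
  calc 2 * |μ x * (gamma w μ a v x + h x * a x * v x)|
      = μ x * (2 * |gamma w μ a v x + h x * a x * v x|) := by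
        rw [abs_mul, abs_of_nonneg hμ]; ring
    _ ≤ μ x * (t * gradSq w μ a x + t⁻¹ * gradSq w μ v x
          + h x * (t * a x ^ 2 + t⁻¹ * v x ^ 2)) := mul_le_mul_of_nonneg_left (by linarith) hμ
    _ = _ := by simp only [energyDensity]; ring

theorem two_mul_mul_abs_le_energyDensity (hw : ∀ y, 0 ≤ w x y) (hμ : 0 ≤ μ x) (hh : 0 < h x) {t : ℝ}
    (ht : 0 < t) (a : V → ℝ) :
    2 * (μ x * |a x|) ≤ t * energyDensity w μ h a x + t⁻¹ * (μ x * (1 / h x)) := by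
  have hyoung := two_mul_abs_mul_le (mul_pos ht hh) (a x) 1
  rw [mul_one, one_pow, mul_one, mul_inv] at hyoung
  have hgrad := mul_nonneg hμ (gradSq_nonneg hw hμ a)
  calc 2 * (μ x * |a x|) = μ x * (2 * |a x|) := by ring
    _ ≤ μ x * (t * h x * a x ^ 2 + t⁻¹ * (h x)⁻¹) := mul_le_mul_of_nonneg_left hyoung hμ
    _ ≤ _ := by simp only [energyDensity, one_div]; linarith [mul_nonneg ht.le hgrad]

theorem abs_le_of_tsum_energyDensity_le (hw : ∀ x y, 0 ≤ w x y) (hμ : ∀ x, 0 < μ x)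
    (hh : ∀ x, 0 < h x) {u : V → ℝ} {K : ℝ} (hu : Summable (energyDensity w μ h u))
    (hK : ∑' x, energyDensity w μ h u x ≤ K) (x : V) :
    |u x| ≤ √(K / (μ x * h x)) := by
  refine Real.abs_le_sqrt ((le_div_iff₀' (mul_pos (hμ x) (hh x))).2 ?_)
  have hle := (hu.le_tsum x fun y _ => energyDensity_nonneg (hw y) (hμ y).le (hh y).le u).trans hK
  have := mul_nonneg (hμ x).le (gradSq_nonneg (hw x) (hμ x).le u)
  simp only [energyDensity] at hle
  linarith

end Energy

section Compactness

variable {α : Type*}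

theorem countable_of_summable_of_ne_zero {f : α → ℝ} (hf : Summable f) (hf0 : ∀ x, f x ≠ 0) :
    Countable α :=
  Set.countable_univ_iff.1 (by simpa [Function.support, hf0] using hf.countable_support)

theorem exists_subseq_tendsto_of_abs_le [Countable α] {a : ℕ → α → ℝ} {r : α → ℝ}
    (ha : ∀ k x, |a k x| ≤ r x) :
    ∃ u : α → ℝ, ∃ φ : ℕ → ℕ, StrictMono φ ∧
      ∀ x, Tendsto (fun k => a (φ k) x) atTop (𝓝 (u x)) := by
  obtain ⟨u, -, φ, hφ, hlim⟩ :=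
    (isCompact_univ_pi fun x => isCompact_closedBall (0 : ℝ) (r x)).tendsto_subseq
      fun k x _ => mem_closedBall_zero_iff.2 (ha k x)
  exact ⟨u, φ, hφ, tendsto_pi_nhds.1 hlim⟩

end Compactness

section Convergence

variable {w : V → V → ℝ} {μ h : V → ℝ} {ι : Type*} {l : Filter ι}

theorem summable_energyDensity_sub (hlf : ∀ x, {y | w x y ≠ 0}.Finite) (hw : ∀ x y, 0 ≤ w x y)
    (hμ : ∀ x, 0 ≤ μ x) (hh : ∀ x, 0 ≤ h x) {a b : V → ℝ}
    (ha : Summable (energyDensity w μ h a)) (hb : Summable (energyDensity w μ h b)) :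
    Summable (energyDensity w μ h (a - b)) :=
  (ha.mul_left 2 |>.add (hb.mul_left 2)).of_nonneg_of_le
    (fun x => energyDensity_nonneg (hw x) (hμ x) (hh x) _)
    fun x => energyDensity_sub_le (hlf x) (hw x) (hμ x) (hh x) a b

theorem tsum_energyDensity_sub_le (hlf : ∀ x, {y | w x y ≠ 0}.Finite) (hw : ∀ x y, 0 ≤ w x y)
    (hμ : ∀ x, 0 ≤ μ x) (hh : ∀ x, 0 ≤ h x) {a b : V → ℝ} {K : ℝ}
    (ha : Summable (energyDensity w μ h a)) (hb : Summable (energyDensity w μ h b))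
    (haK : ∑' x, energyDensity w μ h a x ≤ K) (hbK : ∑' x, energyDensity w μ h b x ≤ K) :
    ∑' x, energyDensity w μ h (a - b) x ≤ 4 * K := by
  have hsub := (summable_energyDensity_sub hlf hw hμ hh ha hb).tsum_le_tsum
    (fun x => energyDensity_sub_le (hlf x) (hw x) (hμ x) (hh x) a b)
    ((ha.mul_left 2).add (hb.mul_left 2))
  rw [(ha.mul_left 2).tsum_add (hb.mul_left 2), tsum_mul_left, tsum_mul_left] at hsub
  linarith

theorem summable_innerDensity (hlf : ∀ x, {y | w x y ≠ 0}.Finite) (hw : ∀ x y, 0 ≤ w x y)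
    (hμ : ∀ x, 0 ≤ μ x) (hh : ∀ x, 0 ≤ h x) {a v : V → ℝ}
    (ha : Summable (energyDensity w μ h a)) (hv : Summable (energyDensity w μ h v)) :
    Summable fun x => μ x * (gamma w μ a v x + h x * a x * v x) :=
  (ha.add hv).of_norm_bounded fun x => by
    have := two_mul_abs_innerDensity_le (hlf x) (hw x) (hμ x) (hh x) one_pos a v
    rw [one_mul, inv_one, one_mul] at this
    rw [Real.norm_eq_abs]
    linarith [abs_nonneg (μ x * (gamma w μ a v x + h x * a x * v x))]

theorem innerH_sub_left (hlf : ∀ x, {y | w x y ≠ 0}.Finite) (hw : ∀ x y, 0 ≤ w x y)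
    (hμ : ∀ x, 0 ≤ μ x) (hh : ∀ x, 0 ≤ h x) {a b v : V → ℝ}
    (ha : Summable (energyDensity w μ h a)) (hb : Summable (energyDensity w μ h b))
    (hv : Summable (energyDensity w μ h v)) :
    innerH w μ h (a - b) v = innerH w μ h a v - innerH w μ h b v := by
  simp only [innerH, intV]
  rw [← (summable_innerDensity hlf hw hμ hh ha hv).tsum_sub
    (summable_innerDensity hlf hw hμ hh hb hv)]
  exact tsum_congr fun x => by rw [gamma_sub_left (hlf x), Pi.sub_apply]; ring

theorem tendsto_innerH_zero (hlf : ∀ x, {y | w x y ≠ 0}.Finite) (hw : ∀ x y, 0 ≤ w x y)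
    (hμ : ∀ x, 0 ≤ μ x) (hh : ∀ x, 0 ≤ h x) {a : ι → V → ℝ} {v : V → ℝ} {K : ℝ}
    (ha : ∀ i, Summable (energyDensity w μ h (a i)))
    (hK : ∀ i, ∑' x, energyDensity w μ h (a i) x ≤ K)
    (ha0 : ∀ x, Tendsto (fun i => a i x) l (𝓝 0)) (hv : Summable (energyDensity w μ h v)) :
    Tendsto (fun i => innerH w μ h (a i) v) l (𝓝 0) := by
  refine tendsto_tsum_zero_of_abs_le (fun x => ?_)
    (fun i x => energyDensity_nonneg (hw x) (hμ x) (hh x) (a i)) ha hK hv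
    fun t ht i x => ?_
  · have hgamma : Tendsto (fun i => gamma w μ (a i) v x) l (𝓝 (gamma w μ 0 v x)) :=
      ((continuous_gamma (hlf x) v).tendsto 0).comp (tendsto_pi_nhds.2 ha0)
    have hgamma0 : gamma w μ 0 v x = 0 := by simp [gamma]
    simpa [hgamma0] using
      ((hgamma.add (((ha0 x).const_mul (h x)).mul_const (v x))).const_mul (μ x))
  · have := two_mul_abs_innerDensity_le (hlf x) (hw x) (hμ x) (hh x) ht (a i) v
    linarith [abs_nonneg (μ x * (gamma w μ (a i) v x + h x * a i x * v x))]

theorem weakConvH_of_tendsto (hlf : ∀ x, {y | w x y ≠ 0}.Finite) (hw : ∀ x y, 0 ≤ w x y)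
    (hμ : ∀ x, 0 ≤ μ x) (hh : ∀ x, 0 ≤ h x) {a : ℕ → V → ℝ} {u : V → ℝ} {K : ℝ}
    (ha : ∀ k, Summable (energyDensity w μ h (a k))) (hu : Summable (energyDensity w μ h u))
    (hK : ∀ k, ∑' x, energyDensity w μ h (a k - u) x ≤ K)
    (hlim : ∀ x, Tendsto (fun k => a k x) atTop (𝓝 (u x))) :
    weakConvH w μ h a u := by
  intro v hv
  rw [memH_iff_summable_energyDensity hw hμ hh] at hv
  have hdiff := tendsto_innerH_zero hlf hw hμ hh
    (fun k => summable_energyDensity_sub hlf hw hμ hh (ha k) hu) hK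
    (fun x => by simpa using (hlim x).sub_const (u x)) hv
  simpa [innerH_sub_left hlf hw hμ hh (ha _) hu hv] using hdiff.add_const (innerH w μ h u v)

theorem summable_mul_abs (hw : ∀ x y, 0 ≤ w x y) (hμ : ∀ x, 0 ≤ μ x) (hh : ∀ x, 0 < h x)
    (hH2 : Summable fun x => μ x * (1 / h x)) {a : V → ℝ}
    (ha : Summable (energyDensity w μ h a)) :
    Summable fun x => μ x * |a x| :=
  (ha.add hH2).of_nonneg_of_le (fun x => mul_nonneg (hμ x) (abs_nonneg _)) fun x => by
    have := two_mul_mul_abs_le_energyDensity (hw x) (hμ x) (hh x) one_pos a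
    rw [one_mul, inv_one, one_mul] at this
    linarith [mul_nonneg (hμ x) (abs_nonneg (a x))]

theorem tendsto_tsum_mul_abs_zero (hw : ∀ x y, 0 ≤ w x y) (hμ : ∀ x, 0 ≤ μ x)
    (hh : ∀ x, 0 < h x) (hH2 : Summable fun x => μ x * (1 / h x)) {a : ι → V → ℝ} {K : ℝ}
    (ha : ∀ i, Summable (energyDensity w μ h (a i)))
    (hK : ∀ i, ∑' x, energyDensity w μ h (a i) x ≤ K)
    (ha0 : ∀ x, Tendsto (fun i => a i x) l (𝓝 0)) :
    Tendsto (fun i => ∑' x, μ x * |a i x|) l (𝓝 0) := by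
  refine tendsto_tsum_zero_of_abs_le (fun x => ?_)
    (fun i x => energyDensity_nonneg (hw x) (hμ x) (hh x).le (a i)) ha hK hH2
    fun t ht i x => ?_
  · simpa using ((ha0 x).abs.const_mul (μ x))
  · have := two_mul_mul_abs_le_energyDensity (hw x) (hμ x) (hh x) ht (a i)
    rw [abs_of_nonneg (mul_nonneg (hμ x) (abs_nonneg _))]
    linarith [mul_nonneg (hμ x) (abs_nonneg (a i x))]

end Convergence

section Lebesgue

variable {μ : V → ℝ} {μmin : ℝ} {ι : Type*} {l : Filter ι}

theorem abs_le_tsum_mul_abs_div (hμmin : 0 < μmin) (hμ : ∀ x, μmin ≤ μ x) {a : V → ℝ}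
    (ha : Summable fun x => μ x * |a x|) (x : V) :
    |a x| ≤ (∑' y, μ y * |a y|) / μmin := by
  rw [le_div_iff₀ hμmin, mul_comm]
  exact (mul_le_mul_of_nonneg_right (hμ x) (abs_nonneg _)).trans
    (ha.le_tsum x fun y _ => mul_nonneg (hμmin.le.trans (hμ y)) (abs_nonneg _))

theorem LqNorm_le_tsum_rpow (hμ : ∀ x, 0 ≤ μ x) {q : ℝ} (hq : 1 ≤ q) {a : V → ℝ}
    (ha1 : ∀ x, |a x| ≤ 1) (ha : Summable fun x => μ x * |a x|) :
    LqNorm μ q a ≤ (∑' x, μ x * |a x|) ^ (1 / q) := by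
  have hpow : ∀ x, μ x * |a x| ^ q ≤ μ x * |a x| := fun x => by
    have := Real.rpow_le_rpow_of_exponent_ge' (abs_nonneg (a x)) (ha1 x) zero_le_one hq
    rw [Real.rpow_one] at this
    exact mul_le_mul_of_nonneg_left this (hμ x)
  have hpow0 : ∀ x, 0 ≤ μ x * |a x| ^ q := fun x => mul_nonneg (hμ x) (by positivity)
  rw [LqNorm, intV]
  exact Real.rpow_le_rpow (tsum_nonneg hpow0)
    ((ha.of_nonneg_of_le hpow0 hpow).tsum_le_tsum hpow ha) (by positivity)

theorem tendsto_LinfNorm_zero (hμmin : 0 < μmin) (hμ : ∀ x, μmin ≤ μ x) {a : ι → V → ℝ}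
    (ha : ∀ i, Summable fun x => μ x * |a i x|)
    (hL1 : Tendsto (fun i => ∑' x, μ x * |a i x|) l (𝓝 0)) :
    Tendsto (fun i => LinfNorm (a i)) l (𝓝 0) := by
  refine squeeze_zero (fun i => Real.iSup_nonneg fun x => abs_nonneg _) (fun i => ?_)
    (by simpa using hL1.div_const μmin)
  exact Real.iSup_le (abs_le_tsum_mul_abs_div hμmin hμ (ha i))
    (div_nonneg (tsum_nonneg fun x => mul_nonneg (hμmin.le.trans (hμ x)) (abs_nonneg _))
      hμmin.le)

theorem tendsto_LqNorm_zero (hμmin : 0 < μmin) (hμ : ∀ x, μmin ≤ μ x) {q : ℝ} (hq : 1 ≤ q)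
    {a : ι → V → ℝ} (ha : ∀ i, Summable fun x => μ x * |a i x|)
    (hL1 : Tendsto (fun i => ∑' x, μ x * |a i x|) l (𝓝 0)) :
    Tendsto (fun i => LqNorm μ q (a i)) l (𝓝 0) := by
  have hμ0 : ∀ x, 0 ≤ μ x := fun x => hμmin.le.trans (hμ x)
  have hbound : ∀ᶠ i in l, LqNorm μ q (a i) ≤ (∑' x, μ x * |a i x|) ^ (1 / q) := by
    filter_upwards [hL1.eventually (ge_mem_nhds hμmin)] with i hi
    refine LqNorm_le_tsum_rpow hμ0 hq (fun x => ?_) (ha i)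
    exact (abs_le_tsum_mul_abs_div hμmin hμ (ha i) x).trans ((div_le_one hμmin).2 hi)
  have hlim := hL1.rpow_const (p := 1 / q) (Or.inr (by positivity))
  rw [Real.zero_rpow (by positivity)] at hlim
  exact squeeze_zero' (.of_forall fun i => Real.rpow_nonneg
    (tsum_nonneg fun x => mul_nonneg (hμ0 x) (by positivity)) _) hbound hlim

end Lebesgue

theorem compact_embedding_H2_general
    (w : V → V → ℝ) (hwnn : ∀ x y, 0 ≤ w x y)
    (hlf : ∀ x : V, {y | w x y ≠ 0}.Finite)
    (μ : V → ℝ) (μmin : ℝ) (hμmin : 0 < μmin) (hμ : ∀ x, μmin ≤ μ x)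
    (h : V → ℝ) (h₀ : ℝ) (hh₀ : 0 < h₀) (hH1 : ∀ x, h₀ ≤ h x)
    (hH2 : Summable fun x => μ x * (1 / h x))
    (uk : ℕ → V → ℝ) (hmem : ∀ k, memH w μ h (uk k))
    (hbd : ∃ C : ℝ, ∀ k, normH w μ h (uk k) ≤ C) :
    ∃ u : V → ℝ, memH w μ h u ∧ ∃ φ : ℕ → ℕ, StrictMono φ ∧
      weakConvH w μ h (fun k => uk (φ k)) u ∧
      (∀ q : ℝ, 1 ≤ q →
        Tendsto (fun k => LqNorm μ q fun x => uk (φ k) x - u x) atTop (nhds 0)) ∧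
      Tendsto (fun k => LinfNorm fun x => uk (φ k) x - u x) atTop (nhds 0) := by
  obtain ⟨C, hC⟩ := hbd
  have hμ0 : ∀ x, 0 < μ x := fun x => hμmin.trans_le (hμ x)
  have hh0 : ∀ x, 0 < h x := fun x => hh₀.trans_le (hH1 x)
  have hμ0' : ∀ x, 0 ≤ μ x := fun x => (hμ0 x).le
  have hh0' : ∀ x, 0 ≤ h x := fun x => (hh0 x).le
  have hE k : Summable (energyDensity w μ h (uk k)) :=
    (memH_iff_summable_energyDensity hwnn hμ0' hh0').1 (hmem k)
  have hEC k : ∑' x, energyDensity w μ h (uk k) x ≤ C ^ 2 := tsum_energyDensity_le_sq (hC k)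
  have : Countable V := countable_of_summable_of_ne_zero hH2 fun x =>
    (mul_pos (hμ0 x) (one_div_pos.2 (hh0 x))).ne'
  obtain ⟨u, φ, hφ, hlim⟩ := exists_subseq_tendsto_of_abs_le fun k =>
    abs_le_of_tsum_energyDensity_le hwnn hμ0 hh0 (hE k) (hEC k)
  obtain ⟨hEu, hEuC⟩ := summable_and_tsum_le_of_tendsto
    (fun k x => energyDensity_nonneg (hwnn x) (hμ0' x) (hh0' x) (uk (φ k)))
    (fun k => hE (φ k)) (fun k => hEC (φ k))
    fun x => ((continuous_energyDensity (hlf x)).tendsto u).comp (tendsto_pi_nhds.2 hlim)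
  have hEd k := summable_energyDensity_sub hlf hwnn hμ0' hh0' (hE (φ k)) hEu
  have hEdC k := tsum_energyDensity_sub_le hlf hwnn hμ0' hh0' (hE (φ k)) hEu (hEC (φ k)) hEuC
  have hd0 x : Tendsto (fun k => uk (φ k) x - u x) atTop (𝓝 0) := by
    simpa using (hlim x).sub_const (u x)
  have hL1 := tendsto_tsum_mul_abs_zero hwnn hμ0' hh0 hH2 hEd hEdC hd0
  have hd1 k := summable_mul_abs hwnn hμ0' hh0 hH2 (hEd k)
  exact ⟨u, (memH_iff_summable_energyDensity hwnn hμ0' hh0').2 hEu, φ, hφ,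
    weakConvH_of_tendsto hlf hwnn hμ0' hh0' (fun k => hE (φ k)) hEu hEdC hlim,
    fun q hq => tendsto_LqNorm_zero hμmin hμ hq hd1 hL1, tendsto_LinfNorm_zero hμmin hμ hd1 hL1⟩

theorem compact_embedding_H2
    (w : V → V → ℝ) (hsymm : ∀ x y, w x y = w y x) (hwnn : ∀ x y, 0 ≤ w x y)
    (hlf : ∀ x : V, {y | w x y ≠ 0}.Finite)
    (μ : V → ℝ) (μmin : ℝ) (hμmin : 0 < μmin) (hμ : ∀ x, μmin ≤ μ x)
    (h : V → ℝ) (h₀ : ℝ) (hh₀ : 0 < h₀) (hH1 : ∀ x, h₀ ≤ h x)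
    (hH2 : Summable fun x => μ x * (1 / h x))
    (uk : ℕ → V → ℝ) (hmem : ∀ k, memH w μ h (uk k))
    (hbd : ∃ C : ℝ, ∀ k, normH w μ h (uk k) ≤ C) :
    ∃ u : V → ℝ, memH w μ h u ∧ ∃ φ : ℕ → ℕ, StrictMono φ ∧
      weakConvH w μ h (fun k => uk (φ k)) u ∧
      (∀ q : ℝ, 1 ≤ q →
        Tendsto (fun k => LqNorm μ q fun x => uk (φ k) x - u x) atTop (nhds 0)) ∧
      Tendsto (fun k => LinfNorm fun x => uk (φ k) x - u x) atTop (nhds 0) :=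
  compact_embedding_H2_general w hwnn hlf μ μmin hμmin hμ h h₀ hh₀ hH1 hH2 uk hmem hbd

end GraphNLE
end

section
/- Let G=(V,E) be a locally finite graph with symmetric positive edge weights and measure μ:V→(0,∞), let h satisfy (H1), and let f satisfy (F2) with f(x,s)=0 for s ≤ 0. Then there exists a nonnegative function u ∈ ℋ such that J(tu) → −∞ as t → +∞, where J(u) = (1/2)∫_V(|∇u|² + hu²)dμ − ∫_V F(x,u)dμ. -/
open Filter Topology

namespace GraphNLE

variable {V : Type*}

/-!
Test `J` along the ray through the indicator `δ` of a single vertex `x₀`, which lies in `ℋ` because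
the graph is locally finite. The quadratic part of `J(tδ)` is `t²` times a constant, while the
potential part is `μ(x₀) F(x₀, t)`. On `[s, r s]` condition (F2) gives `f(x₀, τ) ≥ θ F(x₀, s)/(r s)`,
so `F(x₀, r s) ≥ (1 + θ (1 - 1/r)) F(x₀, s)`, and for `r` close to `1` this factor exceeds `r²`
because `θ > 2`. Iterating yields `F(x₀, t) ≥ c t^α` for some `α > 2`, which beats `t²`.
-/

open MeasureTheory

section Growth

variable {F : ℝ → ℝ} {r K : ℝ}

theorem pow_mul_le_of_scaling (hr : 0 < r) (hK : 0 ≤ K)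
    (hscale : ∀ s, 0 < s → K * F s ≤ F (r * s)) (n : ℕ) : K ^ n * F 1 ≤ F (r ^ n) := by
  induction n with
  | zero => simp
  | succ n ih =>
    calc K ^ (n + 1) * F 1 = K * (K ^ n * F 1) := by ring
      _ ≤ K * F (r ^ n) := mul_le_mul_of_nonneg_left ih hK
      _ ≤ F (r ^ (n + 1)) := by rw [pow_succ']; exact hscale _ (pow_pos hr n)

theorem rpow_logb_le_of_scaling (hr : 1 < r) (hK : 1 ≤ K) (hmono : MonotoneOn F (Set.Ioi 0))
    (hF1 : 0 ≤ F 1) (hscale : ∀ s, 0 < s → K * F s ≤ F (r * s)) {t : ℝ} (ht : 1 ≤ t) :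
    F 1 / K * t ^ Real.logb r K ≤ F t := by
  have hr0 : 0 < r := by linarith
  have hK0 : 0 < K := by linarith
  obtain ⟨n, hrn, htn⟩ := exists_nat_pow_near ht hr
  have ht_rpow : t ^ Real.logb r K ≤ K ^ (n + 1) :=
    calc t ^ Real.logb r K ≤ (r ^ (n + 1)) ^ Real.logb r K :=
          Real.rpow_le_rpow (by linarith) htn.le (Real.logb_nonneg hr hK)
      _ = K ^ (n + 1) := by rw [← Real.rpow_pow_comm hr0.le, Real.rpow_logb hr0 hr.ne' hK0]
  calc F 1 / K * t ^ Real.logb r K ≤ F 1 / K * K ^ (n + 1) :=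
        mul_le_mul_of_nonneg_left ht_rpow (div_nonneg hF1 hK0.le)
    _ = K ^ n * F 1 := by field_simp; ring
    _ ≤ F (r ^ n) := pow_mul_le_of_scaling hr0 hK0.le hscale n
    _ ≤ F t := hmono (pow_pos hr0 n) (by simp only [Set.mem_Ioi]; linarith) hrn

end Growth

def AmbrosettiRabinowitz (θ : ℝ) (g : ℝ → ℝ) : Prop :=
  ∀ s, 0 < s → 0 < θ * ∫ t in (0 : ℝ)..s, g t ∧ θ * ∫ t in (0 : ℝ)..s, g t ≤ s * g s

namespace AmbrosettiRabinowitz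

variable {g : ℝ → ℝ} {θ : ℝ}

theorem pos (hAR : AmbrosettiRabinowitz θ g) {s : ℝ} (hs : 0 < s) : 0 < g s :=
  pos_of_mul_pos_right ((hAR s hs).1.trans_le (hAR s hs).2) hs.le

theorem intervalIntegrable (hAR : AmbrosettiRabinowitz θ g) {s : ℝ} (hs : 0 < s) :
    IntervalIntegrable g volume 0 s := by
  by_contra hg
  have := (hAR s hs).1
  rw [intervalIntegral.integral_undef hg, mul_zero] at this
  exact this.false

theorem monotoneOn_integral (hAR : AmbrosettiRabinowitz θ g) :
    MonotoneOn (fun s => ∫ t in (0 : ℝ)..s, g t) (Set.Ioi 0) := by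
  intro a ha b hb hab
  refine intervalIntegral.integral_mono_interval le_rfl (le_of_lt ha) hab ?_
    (hAR.intervalIntegrable hb)
  exact (ae_restrict_mem measurableSet_Ioc).mono fun t ht => (hAR.pos ht.1).le

theorem scaling (hθ : 0 ≤ θ) (hAR : AmbrosettiRabinowitz θ g) {r : ℝ} (hr : 1 ≤ r)
    {s : ℝ} (hs : 0 < s) :
    (1 + θ * (1 - 1 / r)) * ∫ t in (0 : ℝ)..s, g t ≤ ∫ t in (0 : ℝ)..r * s, g t := by
  set G := fun s => ∫ t in (0 : ℝ)..s, g t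
  have hsr : s ≤ r * s := le_mul_of_one_le_left hs.le hr
  have hint : IntervalIntegrable g volume s (r * s) :=
    (hAR.intervalIntegrable hs).symm.trans (hAR.intervalIntegrable (hs.trans_le hsr))
  have hlower : ∀ τ ∈ Set.Icc s (r * s), θ * G s / (r * s) ≤ g τ := by
    intro τ ⟨hsτ, hτr⟩
    have hτ : 0 < τ := hs.trans_le hsτ
    calc θ * G s / (r * s) ≤ θ * G τ / τ :=
          div_le_div₀ (hAR τ hτ).1.le (mul_le_mul_of_nonneg_left
            (hAR.monotoneOn_integral hs hτ hsτ) hθ) hτ hτr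
      _ ≤ g τ := by rw [div_le_iff₀ hτ, mul_comm (g τ)]; exact (hAR τ hτ).2
  have hgain : θ * (1 - 1 / r) * G s ≤ ∫ t in s..r * s, g t := by
    have := intervalIntegral.integral_mono_on hsr intervalIntegrable_const hint hlower
    rw [intervalIntegral.integral_const, smul_eq_mul] at this
    convert this using 1
    field_simp
  have hsplit : G s + ∫ t in s..r * s, g t = G (r * s) :=
    intervalIntegral.integral_add_adjacent_intervals (hAR.intervalIntegrable hs) hint
  linarith

/-- `1 + θ (1 - 1/r) > r ^ 2` amounts to `r ^ 2 + r < θ`, which holds for `r` close to `1`. -/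
theorem exists_rpow_le_integral (hθ : 2 < θ) (hAR : AmbrosettiRabinowitz θ g) :
    ∃ α > (2 : ℝ), ∃ c > (0 : ℝ), ∀ t, 1 ≤ t → c * t ^ α ≤ ∫ s in (0 : ℝ)..t, g s := by
  have hnear : ∀ᶠ r in 𝓝[>] (1 : ℝ), r ^ 2 + r < θ := by
    have : Tendsto (fun r : ℝ => r ^ 2 + r) (𝓝 1) (𝓝 2) :=
      (by fun_prop : Continuous fun r : ℝ => r ^ 2 + r).tendsto' 1 2 (by norm_num)
    exact nhdsWithin_le_nhds (this.eventually (gt_mem_nhds hθ))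
  obtain ⟨r, hrθ, hr : 1 < r⟩ := (hnear.and self_mem_nhdsWithin).exists
  set K := 1 + θ * (1 - 1 / r)
  have hrK : r ^ 2 < K := by
    have hr0 : 0 < r := by linarith
    have hK : K - r ^ 2 = (r - 1) * (θ - r ^ 2 - r) / r := by simp only [K]; field_simp; ring
    have : 0 < K - r ^ 2 := by rw [hK]; apply div_pos <;> nlinarith
    linarith
  have hG1 : 0 < ∫ t in (0 : ℝ)..1, g t := pos_of_mul_pos_right (hAR 1 one_pos).1 (by linarith)
  refine ⟨Real.logb r K, ?_, _ / K, div_pos hG1 (by nlinarith), fun t ht => ?_⟩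
  · calc (2 : ℝ) = Real.logb r (r ^ 2) := by
          rw [Real.logb_pow, Real.logb_self_eq_one hr]; norm_num
      _ < Real.logb r K := Real.logb_lt_logb hr (by positivity) hrK
  · exact rpow_logb_le_of_scaling hr (by nlinarith) hAR.monotoneOn_integral hG1.le
      (fun s hs => hAR.scaling (by linarith) hr.le hs) ht

end AmbrosettiRabinowitz

theorem tendsto_mul_sq_sub_atBot (A : ℝ) {G : ℝ → ℝ} {α c : ℝ} (hα : 2 < α) (hc : 0 < c)
    (hG : ∀ᶠ t in atTop, c * t ^ α ≤ G t) :
    Tendsto (fun t => A * t ^ 2 - G t) atTop atBot := by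
  have hlim : Tendsto (fun t : ℝ => t ^ α * (A * t ^ (2 - α) - c)) atTop atBot := by
    refine (tendsto_rpow_atTop (by linarith)).atTop_mul_neg (neg_neg_of_pos hc) ?_
    have := (tendsto_rpow_neg_atTop (show 0 < α - 2 by linarith)).const_mul A
    simpa [neg_sub] using this.sub_const c
  refine tendsto_atBot_mono' atTop ?_ hlim
  filter_upwards [hG, eventually_gt_atTop 0] with t hGt ht
  have hpow : t ^ α * t ^ (2 - α) = t ^ 2 := by
    rw [← Real.rpow_add ht, add_sub_cancel, Real.rpow_two]
  calc A * t ^ 2 - G t ≤ A * t ^ 2 - c * t ^ α := by linarith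
    _ = t ^ α * (A * t ^ (2 - α) - c) := by rw [← hpow]; ring

section Graph

variable {w : V → V → ℝ} {μ : V → ℝ}

theorem gradSq_const_mul (u : V → ℝ) (t : ℝ) (x : V) :
    gradSq w μ (fun y => t * u y) x = t ^ 2 * gradSq w μ u x := by
  simp only [gradSq, ← mul_sub, mul_pow, mul_left_comm _ (t ^ 2), tsum_mul_left]

theorem intV_const_mul (g : V → ℝ) (c : ℝ) : intV μ (fun x => c * g x) = c * intV μ g := by
  simp only [intV, mul_left_comm _ c, tsum_mul_left]

theorem energy_const_mul (h : V → ℝ) (f : V → ℝ → ℝ) (u : V → ℝ) (t : ℝ) :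
    energy w μ h f (fun x => t * u x) =
      1 / 2 * intV μ (fun x => gradSq w μ u x + h x * u x ^ 2) * t ^ 2 -
        intV μ (fun x => Fint f x (t * u x)) := by
  have hquad : (fun x => gradSq w μ (fun y => t * u y) x + h x * (t * u x) ^ 2) =
      fun x => t ^ 2 * (gradSq w μ u x + h x * u x ^ 2) := by
    funext x; rw [gradSq_const_mul]; ring
  rw [energy, hquad, intV_const_mul]
  ring

theorem intV_Fint_const_mul_single [DecidableEq V] (f : V → ℝ → ℝ) (x₀ : V) (t : ℝ) :
    intV μ (fun x => Fint f x (t * (Pi.single x₀ (1 : ℝ) : V → ℝ) x)) = μ x₀ * Fint f x₀ t := by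
  rw [intV, tsum_eq_single x₀ fun x hx => by simp [hx, Fint]]
  simp

theorem memH_of_finite_support (hsymm : ∀ x y, w x y = w y x)
    (hlf : ∀ x : V, {y | w x y ≠ 0}.Finite) (h : V → ℝ) {u : V → ℝ}
    (hu : (Function.support u).Finite) : memH w μ h u := by
  refine ⟨summable_of_hasFiniteSupport ?_, summable_of_hasFiniteSupport ?_⟩
  · refine (hu.union (hu.biUnion fun y _ => hlf y)).subset fun x hx => ?_
    by_contra hout
    simp only [Set.mem_union, Function.mem_support, Set.mem_iUnion, Set.mem_ofPred_eq,
      not_or, not_exists, not_not] at hout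
    have hzero : ∀ y, w x y * (u y - u x) ^ 2 = 0 := fun y => by
      by_cases huy : u y = 0
      · simp [huy, hout.1]
      · simp [hsymm x y, hout.2 y huy]
    simp [gradSq, hzero] at hx
  · exact hu.subset fun x hx hux => by simp [hux] at hx

end Graph

theorem energy_unbounded_below_general [Nonempty V]
    (w : V → V → ℝ) (hsymm : ∀ x y, w x y = w y x)
    (hlf : ∀ x : V, {y | w x y ≠ 0}.Finite)
    (μ : V → ℝ) (hμ : ∀ x, 0 < μ x)
    (h : V → ℝ)
    (f : V → ℝ → ℝ)
    (hF2 : ∃ θ : ℝ, 2 < θ ∧ ∀ x, ∀ s : ℝ, 0 < s →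
      0 < θ * Fint f x s ∧ θ * Fint f x s ≤ s * f x s) :
    ∃ u : V → ℝ, memH w μ h u ∧ (∀ x, 0 ≤ u x) ∧
      Tendsto (fun t : ℝ => energy w μ h f fun x => t * u x) atTop atBot := by
  classical
  obtain ⟨θ, hθ, hAR⟩ := hF2
  let x₀ : V := Classical.arbitrary V
  obtain ⟨α, hα, c, hc, hgrowth⟩ := AmbrosettiRabinowitz.exists_rpow_le_integral hθ (hAR x₀)
  refine ⟨Pi.single x₀ 1, memH_of_finite_support hsymm hlf h
    ((Set.finite_singleton x₀).subset Pi.support_single_subset),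
    fun x => (Pi.single_nonneg.2 zero_le_one : (0 : V → ℝ) ≤ _) x, ?_⟩
  simp only [energy_const_mul, intV_Fint_const_mul_single]
  refine tendsto_mul_sq_sub_atBot _ hα (mul_pos (hμ x₀) hc) ?_
  filter_upwards [eventually_ge_atTop 1] with t ht
  rw [mul_assoc]
  exact mul_le_mul_of_nonneg_left (hgrowth t ht) (hμ x₀).le

theorem energy_unbounded_below [Nonempty V]
    (w : V → V → ℝ) (hsymm : ∀ x y, w x y = w y x) (hwnn : ∀ x y, 0 ≤ w x y)
    (hlf : ∀ x : V, {y | w x y ≠ 0}.Finite)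
    (μ : V → ℝ) (hμ : ∀ x, 0 < μ x)
    (h : V → ℝ) (h₀ : ℝ) (hh₀ : 0 < h₀) (hH1 : ∀ x, h₀ ≤ h x)
    (f : V → ℝ → ℝ)
    (hF2 : ∃ θ : ℝ, 2 < θ ∧ ∀ x, ∀ s : ℝ, 0 < s →
      0 < θ * Fint f x s ∧ θ * Fint f x s ≤ s * f x s)
    (hfneg : ∀ x, ∀ s : ℝ, s ≤ 0 → f x s = 0) :
    ∃ u : V → ℝ, memH w μ h u ∧ (∀ x, 0 ≤ u x) ∧
      Tendsto (fun t : ℝ => energy w μ h f fun x => t * u x) atTop atBot :=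
  energy_unbounded_below_general w hsymm hlf μ hμ h f hF2

end GraphNLE
end
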